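/- Fix g ≥ 1. The action of Sp_{2g}(ℤ)[2] on B̂_g(ℤ) is without rotations: if M ∈ Sp_{2g}(ℤ)[2] and σ = {⟨v_0⟩,…,⟨v_k⟩} is a simplex of B̂_g(ℤ) with M(σ) = σ as a set of lax vectors, then M(⟨v_i⟩) = ⟨v_i⟩ (that is, M v_i = ±v_i) for every i. The same holds for the action of Sp_{2g}(ℤ)[2] on the subcomplex B_g(ℤ). -/

import Mathlib

open scoped BigOperators

/-- The free module `R^{2g}`. -/
abbrev SV (g : ℕ) (R : Type) [CommRing R] : Type := Fin (2*g) → R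

/-- The standard symplectic form on `R^{2g}`. -/
def symplForm (g : ℕ) (R : Type) [CommRing R] (v w : SV g R) : R :=
  ∑ i : Fin g,
    (v ⟨i.1, by have := i.isLt; omega⟩ * w ⟨g + i.1, by have := i.isLt; omega⟩ -
      v ⟨g + i.1, by have := i.isLt; omega⟩ * w ⟨i.1, by have := i.isLt; omega⟩)

/-- `(a; b)` is a symplectic basis of `R^{2g}`. -/
def IsSymplBasis (g : ℕ) (R : Type) [CommRing R] (a b : Fin g → SV g R) : Prop :=
  (∃ B : Module.Basis (Fin g ⊕ Fin g) R (SV g R),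
      (∀ i, B (Sum.inl i) = a i) ∧ (∀ i, B (Sum.inr i) = b i)) ∧
  (∀ i j, symplForm g R (a i) (a j) = 0) ∧
  (∀ i j, symplForm g R (b i) (b j) = 0) ∧
  (∀ i j, symplForm g R (a i) (b j) = if i = j then 1 else 0)

/-- `(a_1,…,a_k; b_1,…,b_l)` is a partial symplectic basis of `R^{2g}`:
it extends to a symplectic basis. -/
def IsPartialSymplBasis (g : ℕ) (R : Type) [CommRing R] {k l : ℕ}
    (a : Fin k → SV g R) (b : Fin l → SV g R) : Prop :=
  ∃ (hk : k ≤ g) (hl : l ≤ g) (A B : Fin g → SV g R), IsSymplBasis g R A B ∧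
    (∀ i, A (Fin.castLE hk i) = a i) ∧ (∀ j, B (Fin.castLE hl j) = b j)

/-- The lax vector `⟨v⟩ = {v, -v}`. -/
def lax {α : Type} [Neg α] (v : α) : Set α := {v, -v}

/-- Standard simplices of the complex of lax isotropic bases `B_g(R)`.  (The set of
vertices of a simplex.) -/
def IsStdSimplex (g : ℕ) (R : Type) [CommRing R] (σ : Set (Set (SV g R))) : Prop :=
  ∃ (k : ℕ) (a : Fin k → SV g R),
    IsPartialSymplBasis g R a (fun i : Fin 0 => i.elim0) ∧
    σ = Set.range fun i => lax (a i)

/-- Simplices of intersection type of the augmented complex `B̂_g(R)`. -/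
def IsIntSimplex (g : ℕ) (R : Type) [CommRing R] (σ : Set (Set (SV g R))) : Prop :=
  ∃ (k : ℕ) (a : Fin k → SV g R) (b : SV g R), 1 ≤ k ∧
    IsPartialSymplBasis g R a (fun _ : Fin 1 => b) ∧
    σ = insert (lax b) (Set.range fun i => lax (a i))

/-- Simplices of additive type of the augmented complex `B̂_g(R)`. -/
def IsAddSimplex (g : ℕ) (R : Type) [CommRing R] (σ : Set (Set (SV g R))) : Prop :=
  ∃ (k m : ℕ) (a : Fin k → SV g R) (ε : Fin k → R), (m = 2 ∨ m = 3) ∧ m ≤ k ∧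
    (∀ i, ε i = 1 ∨ ε i = -1) ∧
    IsPartialSymplBasis g R a (fun i : Fin 0 => i.elim0) ∧
    σ = insert (lax (∑ i : Fin k, if (i : ℕ) < m then ε i • a i else 0))
        (Set.range fun i => lax (a i))

/-- Simplices of the augmented complex of lax isotropic bases `B̂_g(R)`. -/
def IsHatSimplex (g : ℕ) (R : Type) [CommRing R] (σ : Set (Set (SV g R))) : Prop :=
  IsStdSimplex g R σ ∨ IsIntSimplex g R σ ∨ IsAddSimplex g R σ

/-- Coordinatewise reduction `ℤ^{2g} → (ℤ/2)^{2g}`. -/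
def rMap (g : ℕ) (v : SV g ℤ) : SV g (ZMod 2) := fun i => ((v i : ℤ) : ZMod 2)

/-- The reduction map on simplices, sending each lax vector `⟨v⟩` (as a set) to its image. -/
def rSimp (g : ℕ) (σ : Set (Set (SV g ℤ))) : Set (Set (SV g (ZMod 2))) :=
  (fun s => rMap g '' s) '' σ

/-- The group of `R`-linear automorphisms of `R^{2g}`. -/
abbrev SAut (g : ℕ) (R : Type) [CommRing R] : Type := (SV g R) ≃ₗ[R] (SV g R)

/-- The symplectic group `Sp_{2g}(R)`, as the subgroup of linear automorphisms of
`R^{2g}` preserving the standard symplectic form. -/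
def Sp (g : ℕ) (R : Type) [CommRing R] : Subgroup (SAut g R) where
  carrier := {M | ∀ v w, symplForm g R (M v) (M w) = symplForm g R v w}
  one_mem' := by intro v w; rfl
  mul_mem' := by
    intro M N hM hN v w
    exact (hM (N v) (N w)).trans (hN v w)
  inv_mem' := by
    intro M hM v w
    have h := hM (M.symm v) (M.symm w)
    simpa using h.symm

/-- The level 2 congruence subgroup `Sp_{2g}(ℤ)[2]`, the kernel of the reduction
`Sp_{2g}(ℤ) → Sp_{2g}(ℤ/2)`: symplectic automorphisms acting trivially mod 2. -/
def SpLevel2 (g : ℕ) : Subgroup (SAut g ℤ) where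
  carrier := {M | M ∈ Sp g ℤ ∧ ∀ v, rMap g (M v) = rMap g v}
  one_mem' := ⟨(Sp g ℤ).one_mem, fun _ => rfl⟩
  mul_mem' := by
    rintro M N ⟨hM, hM2⟩ ⟨hN, hN2⟩
    exact ⟨(Sp g ℤ).mul_mem hM hN, fun v => ((hM2 (N v)).trans (hN2 v) : _)⟩
  inv_mem' := by
    rintro M ⟨hM, hM2⟩
    refine ⟨(Sp g ℤ).inv_mem hM, fun v => ?_⟩
    have := hM2 (M.symm v)
    simp only [LinearEquiv.apply_symm_apply] at this
    exact this.symm ▸ rfl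

/-!
A level-2 matrix fixes every vector mod 2, so it maps each vertex `⟨v⟩` of a simplex it
stabilises to a vertex with the same reduction mod 2. It therefore suffices that distinct
vertices of a simplex of `B̂_g(ℤ)` have distinct reductions. Reduction commutes with the
symplectic form, and in each case two distinct vertices are told apart by the parity of
their pairing with a suitable `b_j` or `a_j` of a symplectic basis extending the simplex.
-/

section Lax

variable {α : Type}

lemma mem_lax_iff [Neg α] {u v : α} : u ∈ lax v ↔ u = v ∨ u = -v := Iff.rfl

lemma mem_lax_self [Neg α] (v : α) : v ∈ lax v := Or.inl rfl

lemma image_lax {β F : Type} [AddGroup α] [AddGroup β] [FunLike F α β]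
    [AddMonoidHomClass F α β] (f : F) (v : α) : f '' lax v = lax (f v) := by
  rw [lax, Set.image_pair, map_neg, lax]

end Lax

section Symplectic

variable {g : ℕ} {R : Type} [CommRing R]

lemma symplForm_sum_smul_left {ι : Type} (s : Finset ι) (c : ι → R) (f : ι → SV g R)
    (w : SV g R) :
    symplForm g R (∑ i ∈ s, c i • f i) w = ∑ i ∈ s, c i * symplForm g R (f i) w := by
  simp only [symplForm, Finset.sum_apply, Pi.smul_apply, smul_eq_mul, Finset.mul_sum,
    Finset.sum_mul, ← Finset.sum_sub_distrib]
  rw [Finset.sum_comm]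
  refine Finset.sum_congr rfl fun _ _ => Finset.sum_congr rfl fun _ _ => by ring

lemma symplForm_swap (v w : SV g R) : symplForm g R w v = -symplForm g R v w := by
  simp only [symplForm, ← Finset.sum_neg_distrib]
  exact Finset.sum_congr rfl fun _ _ => by ring

end Symplectic

section Reduction

variable {g : ℕ}

lemma rMap_neg (v : SV g ℤ) : rMap g (-v) = rMap g v := by
  funext i
  simp only [rMap, Pi.neg_apply, Int.cast_neg, CharTwo.neg_eq]

lemma rMap_eq_of_lax_eq {u v : SV g ℤ} (h : lax u = lax v) : rMap g u = rMap g v := by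
  rcases mem_lax_iff.1 (h ▸ mem_lax_self u) with rfl | rfl
  exacts [rfl, rMap_neg v]

lemma symplForm_rMap (v w : SV g ℤ) :
    symplForm g (ZMod 2) (rMap g v) (rMap g w) = (symplForm g ℤ v w : ZMod 2) := by
  simp only [symplForm, rMap, Int.cast_sum, Int.cast_sub, Int.cast_mul]

lemma intCast_symplForm_eq_of_rMap_eq {u v : SV g ℤ} (h : rMap g u = rMap g v) (w : SV g ℤ) :
    (symplForm g ℤ u w : ZMod 2) = symplForm g ℤ v w := by
  rw [← symplForm_rMap, h, symplForm_rMap]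

end Reduction

lemma exists_lt_ne_of_two_le {k m : ℕ} (hm : 2 ≤ m) (hmk : m ≤ k) (j : Fin k) :
    ∃ i : Fin k, (i : ℕ) < m ∧ i ≠ j := by
  by_cases hj : (j : ℕ) = 0
  · exact ⟨⟨1, by omega⟩, by simp only; omega, fun h => by simp [Fin.ext_iff] at h; omega⟩
  · exact ⟨⟨0, by omega⟩, by simp only; omega, fun h => by simp [Fin.ext_iff] at h; omega⟩

namespace IsPartialSymplBasis

variable {g k l : ℕ}

lemma exists_symplForm_dual {R : Type} [CommRing R] {a : Fin k → SV g R} {b : Fin l → SV g R}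
    (h : IsPartialSymplBasis g R a b) :
    ∃ c : Fin k → SV g R, ∀ i j, symplForm g R (a i) (c j) = if i = j then 1 else 0 := by
  obtain ⟨hk, -, A, B, ⟨-, -, -, hAB⟩, hA, -⟩ := h
  exact ⟨fun j => B (Fin.castLE hk j), fun i j => by simp [← hA, hAB, Fin.castLE_inj]⟩

variable {a : Fin k → SV g ℤ} {b : Fin l → SV g ℤ}

lemma rMap_injective (h : IsPartialSymplBasis g ℤ a b) : Function.Injective (rMap g ∘ a) := by
  obtain ⟨c, hc⟩ := h.exists_symplForm_dual
  intro i j hij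
  by_contra hne
  have := intCast_symplForm_eq_of_rMap_eq hij (c i)
  simp [hc, Ne.symm hne] at this

lemma rMap_ne (h : IsPartialSymplBasis g ℤ a b) (i : Fin k) (j : Fin l) :
    rMap g (a i) ≠ rMap g (b j) := by
  obtain ⟨hk, hl, A, B, ⟨-, hAA, -, hAB⟩, hA, hB⟩ := h
  intro hij
  have := intCast_symplForm_eq_of_rMap_eq hij (A (Fin.castLE hl j))
  simp [← hA, ← hB, hAA, symplForm_swap (A _), hAB] at this

lemma rMap_ne_signedSum (h : IsPartialSymplBasis g ℤ a b) {m : ℕ} {ε : Fin k → ℤ}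
    (hε : ∀ i, ε i = 1 ∨ ε i = -1) (hm : 2 ≤ m) (hmk : m ≤ k) (j : Fin k) :
    rMap g (a j) ≠ rMap g (∑ i : Fin k, if (i : ℕ) < m then ε i • a i else 0) := by
  obtain ⟨c, hc⟩ := h.exists_symplForm_dual
  obtain ⟨i₀, hi₀m, hi₀j⟩ := exists_lt_ne_of_two_le hm hmk j
  have hsum :
      symplForm g ℤ (∑ i : Fin k, if (i : ℕ) < m then ε i • a i else 0) (c i₀) = ε i₀ := by
    rw [← Finset.sum_filter, symplForm_sum_smul_left]
    simp [hc, hi₀m]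
  intro hj
  have := intCast_symplForm_eq_of_rMap_eq hj (c i₀)
  rw [hsum, hc, if_neg hi₀j.symm] at this
  rcases hε i₀ with h | h <;> simp [h] at this

end IsPartialSymplBasis

def VerticesDistinctModTwo (g : ℕ) (σ : Set (Set (SV g ℤ))) : Prop :=
  ∀ ⦃u v : SV g ℤ⦄, lax u ∈ σ → lax v ∈ σ → rMap g u = rMap g v → lax u = lax v

section VerticesDistinctModTwo

variable {g : ℕ} {ι : Type}

lemma verticesDistinctModTwo_range (f : ι → SV g ℤ) (hf : Function.Injective (rMap g ∘ f)) :
    VerticesDistinctModTwo g (Set.range fun i => lax (f i)) := by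
  rintro u v ⟨i, hi⟩ ⟨j, hj⟩ huv
  have hij : i = j := hf <| by
    simp only [Function.comp_apply, rMap_eq_of_lax_eq hi, rMap_eq_of_lax_eq hj, huv]
  rw [← hi, ← hj, hij]

lemma VerticesDistinctModTwo.insert {σ : Set (Set (SV g ℤ))} (h : VerticesDistinctModTwo g σ)
    {w : SV g ℤ} (hw : ∀ v, lax v ∈ σ → rMap g v ≠ rMap g w) :
    VerticesDistinctModTwo g (insert (lax w) σ) := by
  rintro u v (hu | hu) (hv | hv) huv
  · exact hu.trans hv.symm
  · exact absurd (huv.symm.trans (rMap_eq_of_lax_eq hu)) (hw v hv)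
  · exact absurd (huv.trans (rMap_eq_of_lax_eq hv)) (hw u hu)
  · exact h hu hv huv

lemma verticesDistinctModTwo_insert_range (f : ι → SV g ℤ)
    (hf : Function.Injective (rMap g ∘ f)) {w : SV g ℤ} (hw : ∀ i, rMap g (f i) ≠ rMap g w) :
    VerticesDistinctModTwo g (insert (lax w) (Set.range fun i => lax (f i))) := by
  refine (verticesDistinctModTwo_range f hf).insert ?_
  rintro v ⟨i, hi⟩
  rw [← rMap_eq_of_lax_eq hi]
  exact hw i

lemma IsHatSimplex.verticesDistinctModTwo {σ : Set (Set (SV g ℤ))} (hσ : IsHatSimplex g ℤ σ) :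
    VerticesDistinctModTwo g σ := by
  rcases hσ with ⟨k, a, ha, rfl⟩ | ⟨k, a, b, -, ha, rfl⟩ | ⟨k, m, a, ε, hm, hmk, hε, ha, rfl⟩
  · exact verticesDistinctModTwo_range a ha.rMap_injective
  · exact verticesDistinctModTwo_insert_range a ha.rMap_injective fun i => ha.rMap_ne i 0
  · exact verticesDistinctModTwo_insert_range a ha.rMap_injective
      (ha.rMap_ne_signedSum hε (by omega) hmk)

end VerticesDistinctModTwo

theorem spLevel2_action_without_rotations_general (g : ℕ)
    (M : SAut g ℤ) (hM : M ∈ SpLevel2 g)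
    (σ : Set (Set (SV g ℤ))) (hσ : IsHatSimplex g ℤ σ)
    (hfix : (fun s => (⇑M) '' s) '' σ = σ) :
    ∀ v : SV g ℤ, lax v ∈ σ → M v = v ∨ M v = -v := by
  intro v hv
  have hMv : lax (M v) ∈ σ := hfix ▸ ⟨lax v, hv, image_lax M v⟩
  have hlax : lax (M v) = lax v := hσ.verticesDistinctModTwo hMv hv (hM.2 v)
  exact mem_lax_iff.1 (hlax ▸ mem_lax_self (M v))

/-- The action of `Sp_{2g}(ℤ)[2]` on the augmented complex `B̂_g(ℤ)`
(hence also on the subcomplex `B_g(ℤ)`) is without rotations. -/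
theorem spLevel2_action_without_rotations (g : ℕ) (hg : 1 ≤ g)
    (M : SAut g ℤ) (hM : M ∈ SpLevel2 g)
    (σ : Set (Set (SV g ℤ))) (hσ : IsHatSimplex g ℤ σ)
    (hfix : (fun s => (⇑M) '' s) '' σ = σ) :
    ∀ v : SV g ℤ, lax v ∈ σ → M v = v ∨ M v = -v :=
  spLevel2_action_without_rotations_general g M hM σ hσ hfix
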